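/- The number of additive (F_2-linear) self-orthogonal codes C ⊆ F_4^n of size 2^t with respect to the trace inner product equals S(n,t) = ∏_{r=0}^{t-1} (2^{2(n-r)} - 1)/(2^{r+1} - 1). -/

import Mathlib

/-- The trace inner product `v * w = Tr_{F₄/F₂}(Σᵢ vᵢ conj(wᵢ))` on `F₄ⁿ`,
with `conj x = x²` and `Tr x = x + x²` (valued in the prime subfield of `F₄`). -/
noncomputable def traceIP {n : ℕ} (v w : Fin n → GaloisField 2 2) : GaloisField 2 2 :=
  (∑ i, v i * (w i)^2) + (∑ i, v i * (w i)^2)^2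

/-- An additive (`F₂`-linear) code `C ⊆ F₄ⁿ` is self-orthogonal if `v * w = 0`
for all `v, w ∈ C`. -/
def IsSelfOrthogonal {n : ℕ} (C : Submodule (ZMod 2) (Fin n → GaloisField 2 2)) : Prop :=
  ∀ v ∈ C, ∀ w ∈ C, traceIP v w = 0

open Module LinearMap

noncomputable section SOCount

abbrev Kk : Type := ZMod 2
abbrev Ff : Type := GaloisField 2 2

instance : DecidableEq Ff := Classical.decEq _

lemma Ff_card : Nat.card Ff = 4 := by
  have := GaloisField.card 2 2 (by norm_num)
  simpa using this

instance : Fintype Ff := Fintype.ofFinite _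

lemma Ff_fcard : Fintype.card Ff = 4 := by
  rw [← Nat.card_eq_fintype_card]; exact Ff_card

lemma Ff_pow4 (x : Ff) : x ^ 4 = x := by
  have := FiniteField.pow_card x
  rwa [Ff_fcard] at this

lemma Ff_two : (2 : Ff) = 0 := by
  have : ((2 : ℕ) : Ff) = 0 := CharP.cast_eq_zero Ff 2
  simpa using this

lemma tr_mem (x : Ff) : x + x^2 = 0 ∨ x + x^2 = 1 := by
  have h : (x + x^2)^2 = x + x^2 := by
    have h2 : (x + x^2)^2 = x^2 + (x^2)^2 := add_pow_char x (x^2) 2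
    rw [h2, ← pow_mul]
    norm_num
    rw [Ff_pow4 x, add_comm]
  have := mul_eq_zero.mp (by linear_combination h : (x + x^2) * ((x + x^2) - 1) = 0)
  rcases this with h | h
  · exact Or.inl h
  · exact Or.inr (by linear_combination h)

/-- trace to `ZMod 2`. -/
def tau (x : Ff) : Kk := if x + x^2 = 0 then 0 else 1

lemma tau_eq_zero_iff {x : Ff} : tau x = 0 ↔ x + x^2 = 0 := by
  unfold tau
  split
  · simp [*]
  · simp only [iff_false, *]
    decide

lemma tr_add (x y : Ff) : (x+y) + (x+y)^2 = (x + x^2) + (y + y^2) := by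
  rw [add_pow_char x y 2]; ring

lemma tau_add (x y : Ff) : tau (x + y) = tau x + tau y := by
  unfold tau
  rw [tr_add]
  rcases tr_mem x with hx | hx <;> rcases tr_mem y with hy | hy <;> rw [hx, hy]
  · norm_num
  · norm_num
  · norm_num
  · rw [one_add_one_eq_two, Ff_two]
    norm_num
    decide

/-- the `ZMod 2`-bilinear form on `F₄ⁿ` associated to the trace inner product. -/
def Bf (n : ℕ) : LinearMap.BilinForm Kk (Fin n → Ff) :=
  AddMonoidHom.toZModLinearMap 2
  { toFun := fun v => AddMonoidHom.toZModLinearMap 2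
      { toFun := fun w => tau (∑ i, v i * (w i)^2)
        map_zero' := by simp [tau]
        map_add' := by
          intro w w'
          have hs : (∑ i, v i * ((w + w') i)^2)
              = (∑ i, v i * (w i)^2) + (∑ i, v i * (w' i)^2) := by
            rw [← Finset.sum_add_distrib]
            refine Finset.sum_congr rfl fun i _ => ?_
            rw [Pi.add_apply, add_pow_char (w i) (w' i) 2]
            ring
          show tau _ = tau _ + tau _
          rw [hs, tau_add] }
    map_zero' := by
      refine LinearMap.ext fun w => ?_
      show tau _ = 0
      simp [tau]
    map_add' := by
      intro v v'
      refine LinearMap.ext fun w => ?_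
      have hs : (∑ i, (v + v') i * (w i)^2)
          = (∑ i, v i * (w i)^2) + (∑ i, v' i * (w i)^2) := by
        rw [← Finset.sum_add_distrib]
        refine Finset.sum_congr rfl fun i _ => ?_
        rw [Pi.add_apply]; ring
      show tau _ = tau _ + tau _
      rw [hs, tau_add] }

lemma Bf_apply {n : ℕ} (v w : Fin n → Ff) : Bf n v w = tau (∑ i, v i * (w i)^2) := rfl

lemma traceIP_zero_iff {n : ℕ} (v w : Fin n → Ff) :
    ((∑ i, v i * (w i)^2) + (∑ i, v i * (w i)^2)^2 = 0) ↔ Bf n v w = 0 := by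
  rw [Bf_apply, tau_eq_zero_iff]

lemma Bf_isAlt (n : ℕ) : (Bf n).IsAlt := by
  intro v
  rw [Bf_apply, tau_eq_zero_iff]
  have h2 : (∑ i, v i * (v i)^2)^2 = ∑ i, (v i * (v i)^2)^2 :=
    sum_pow_char 2 Finset.univ (fun i => v i * v i ^ 2)
  rw [h2, ← Finset.sum_add_distrib]
  refine Finset.sum_eq_zero fun i _ => ?_
  have h4 : (v i)^4 = v i := Ff_pow4 (v i)
  linear_combination (v i ^ 2) * h4 + (v i ^ 3) * Ff_two

lemma Bf_isRefl (n : ℕ) : (Bf n).IsRefl := (Bf_isAlt n).isRefl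

lemma exists_tr_ne : ∃ y : Ff, y + y^2 ≠ 0 := by
  by_contra h
  push_neg at h
  have h01 : ∀ y : Ff, y = 0 ∨ y = 1 := by
    intro y
    have hy : y * (y - 1) = 0 := by linear_combination (h y) - y * Ff_two
    rcases mul_eq_zero.mp hy with h' | h'
    · exact Or.inl h'
    · exact Or.inr (by linear_combination h')
  have hle : Fintype.card Ff ≤ 2 := by
    have hsub : (Finset.univ : Finset Ff) ⊆ {0, 1} := fun y _ => by
      rcases h01 y with h' | h' <;> simp [h']
    calc Fintype.card Ff = (Finset.univ : Finset Ff).card := rfl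
      _ ≤ ({0,1} : Finset Ff).card := Finset.card_le_card hsub
      _ ≤ 2 := (Finset.card_insert_le _ _).trans (by simp)
  rw [Ff_fcard] at hle
  omega

lemma Bf_nondeg (n : ℕ) : (Bf n).Nondegenerate := by
  refine (Bf_isRefl n).nondegenerate_iff_separatingLeft.mpr ?_
  intro v hv
  by_contra hv0
  obtain ⟨i, hi⟩ : ∃ i, v i ≠ 0 := by
    by_contra h; push_neg at h; exact hv0 (funext h)
  obtain ⟨y, hy⟩ := exists_tr_ne
  set c : Ff := (y / v i)^2 with hc
  have hcc : v i * c^2 = y := by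
    rw [hc, ← pow_mul]
    norm_num
    rw [Ff_pow4]
    field_simp
  have hB := hv (Pi.single i c)
  rw [Bf_apply, tau_eq_zero_iff] at hB
  rw [Finset.sum_eq_single i (fun j _ hj => by simp [Pi.single_eq_of_ne hj])
      (fun h => absurd (Finset.mem_univ i) h)] at hB
  rw [Pi.single_eq_same, hcc] at hB
  exact hy hB


section Counting

lemma Kk_cases : ∀ a : Kk, a = 0 ∨ a = 1 := by decide

lemma Kk_eq_of_ne_zero : ∀ a b : Kk, a ≠ 0 → b ≠ 0 → a = b := by decide

lemma card_module (X : Type*) [AddCommGroup X] [Module Kk X] [Finite X] :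
    Nat.card X = 2 ^ finrank Kk X := by
  classical
  cases nonempty_fintype X
  rw [Nat.card_eq_fintype_card, card_eq_pow_finrank (K := Kk) (V := X), ZMod.card]

lemma card_of_fibers {A B : Type*} [Finite A] [Finite B] (f : A → B) (c : ℕ)
    (h : ∀ b : B, Nat.card {a : A // f a = b} = c) : Nat.card A = Nat.card B * c := by
  classical
  cases nonempty_fintype A
  cases nonempty_fintype B
  rw [Nat.card_eq_fintype_card, Nat.card_eq_fintype_card]
  rw [← Fintype.card_congr (Equiv.sigmaFiberEquiv f)]
  rw [Fintype.card_sigma]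
  have hc : ∀ b : B, Fintype.card {a : A // f a = b} = c := fun b => by
    rw [← Nat.card_eq_fintype_card]; exact h b
  simp only [hc, Finset.sum_const, Finset.card_univ, smul_eq_mul]

lemma card_ne_zero_sub {X : Type*} [Finite X] [AddCommGroup X] :
    Nat.card {x : X // x ≠ 0} = Nat.card X - 1 := by
  classical
  cases nonempty_fintype X
  rw [Nat.card_eq_fintype_card, Nat.card_eq_fintype_card]
  have := Fintype.card_subtype_compl (fun x : X => x = 0)
  rw [Fintype.card_subtype_eq (0 : X)] at this
  exact this

lemma card_diff {V : Type*} [AddCommGroup V] [Module Kk V] [Finite V]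
    (U W : Submodule Kk V) (h : U ≤ W) :
    Nat.card {x : V // x ∈ W ∧ x ∉ U} = Nat.card W - Nat.card U := by
  classical
  cases nonempty_fintype V
  have e1 : {x : V // x ∈ W ∧ x ∉ U} ≃ {y : W // ¬ ((y : V) ∈ U)} :=
    { toFun := fun x => ⟨⟨x.1, x.2.1⟩, x.2.2⟩
      invFun := fun y => ⟨y.1.1, y.1.2, y.2⟩
      left_inv := fun x => rfl
      right_inv := fun y => rfl }
  have e2 : {y : W // (y : V) ∈ U} ≃ U :=
    { toFun := fun y => ⟨y.1.1, y.2⟩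
      invFun := fun u => ⟨⟨u.1, h u.2⟩, u.2⟩
      left_inv := fun y => rfl
      right_inv := fun u => rfl }
  rw [Nat.card_congr e1]
  rw [Nat.card_eq_fintype_card, Nat.card_eq_fintype_card, Nat.card_eq_fintype_card]
  rw [Fintype.card_subtype_compl (fun y : W => (y : V) ∈ U)]
  rw [Fintype.card_congr e2]

lemma card_lines (X : Type*) [AddCommGroup X] [Module Kk X] [Finite X] :
    Nat.card {L : Submodule Kk X // finrank Kk L = 1} = Nat.card X - 1 := by
  haveI : Module.Finite Kk X := Module.finite_iff_finite.mpr inferInstance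
  have e : {x : X // x ≠ 0} ≃ {L : Submodule Kk X // finrank Kk L = 1} := by
    refine Equiv.ofBijective
      (fun x => ⟨Submodule.span Kk {x.1}, finrank_span_singleton x.2⟩) ⟨?_, ?_⟩
    · intro x y hxy
      have hsp : Submodule.span Kk {x.1} = Submodule.span Kk {y.1} :=
        congrArg Subtype.val hxy
      have hx : x.1 ∈ Submodule.span Kk {y.1} :=
        hsp ▸ Submodule.mem_span_singleton_self x.1
      obtain ⟨a, ha⟩ := Submodule.mem_span_singleton.mp hx
      rcases Kk_cases a with h | h
      · rw [h, zero_smul] at ha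
        exact absurd ha.symm x.2
      · rw [h, one_smul] at ha
        exact Subtype.ext ha.symm
    · rintro ⟨L, hL⟩
      have hne : L ≠ ⊥ := by
        intro hbot
        rw [hbot, finrank_bot] at hL
        omega
      obtain ⟨x, hxL, hx0⟩ := Submodule.ne_bot_iff L |>.mp hne
      have hle : Submodule.span Kk {x} ≤ L := Submodule.span_le.mpr (by simpa using hxL)
      have heq : Submodule.span Kk {x} = L := Submodule.eq_of_le_of_finrank_le hle
        (by rw [hL, finrank_span_singleton hx0])
      exact ⟨⟨x, hx0⟩, Subtype.ext heq⟩
  rw [← Nat.card_congr e, card_ne_zero_sub]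

lemma card_hyperplanes (X : Type*) [AddCommGroup X] [Module Kk X] [Finite X] (e : ℕ)
    (hX : finrank Kk X = e + 1) :
    Nat.card {W : Submodule Kk X // finrank Kk W = e} = Nat.card X - 1 := by
  haveI : Module.Finite Kk X := Module.finite_iff_finite.mpr inferInstance
  haveI : Finite (Dual Kk X) := Module.finite_of_finite Kk
  have hdual : Nat.card (Dual Kk X) = Nat.card X := by
    rw [card_module (Dual Kk X), card_module X, Subspace.dual_finrank_eq]
  have eqv : {φ : Dual Kk X // φ ≠ 0} ≃ {W : Submodule Kk X // finrank Kk W = e} := by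
    refine Equiv.ofBijective (fun φ => ⟨LinearMap.ker φ.1, ?_⟩) ⟨?_, ?_⟩
    · -- finrank of kernel
      have hrk := LinearMap.finrank_range_add_finrank_ker φ.1
      have hrange : LinearMap.range φ.1 = ⊤ := by
        rcases Ideal.eq_bot_or_top (LinearMap.range φ.1) with hb | ht
        · exact absurd (LinearMap.range_eq_bot.mp hb) φ.2
        · exact ht
      rw [hrange, finrank_top, finrank_self, hX] at hrk
      omega
    · rintro ⟨φ, hφ⟩ ⟨ψ, hψ⟩ hk
      have hker : LinearMap.ker φ = LinearMap.ker ψ := congrArg Subtype.val hk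
      refine Subtype.ext (LinearMap.ext fun x => ?_)
      by_cases hx : φ x = 0
      · have : x ∈ LinearMap.ker ψ := hker ▸ LinearMap.mem_ker.mpr hx
        rw [hx, LinearMap.mem_ker.mp this]
      · have hψx : ψ x ≠ 0 := by
          intro h0
          exact hx (LinearMap.mem_ker.mp (hker ▸ LinearMap.mem_ker.mpr h0))
        exact Kk_eq_of_ne_zero _ _ hx hψx
    · rintro ⟨W, hW⟩
      have hq : finrank Kk (X ⧸ W) = 1 := by
        have := Submodule.finrank_quotient_add_finrank W
        rw [hX, hW] at this
        omega
      let b : Basis PUnit.{1} Kk (X ⧸ W) := Module.basisUnique PUnit.{1} hq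
      let φ : X →ₗ[Kk] Kk :=
        (LinearMap.proj default) ∘ₗ (b.equivFun.toLinearMap ∘ₗ W.mkQ)
      have hker : LinearMap.ker φ = W := by
        ext x
        simp only [LinearMap.mem_ker, LinearMap.comp_apply, LinearMap.proj_apply,
          LinearEquiv.coe_coe, φ]
        constructor
        · intro h0
          have hfun : b.equivFun (W.mkQ x) = 0 := by
            funext u
            rw [Unique.eq_default u]
            exact h0
          have hz : W.mkQ x = 0 := by
            have h' := congrArg b.equivFun.symm hfun
            rw [LinearEquiv.symm_apply_apply] at h'
            simpa using h'
          exact (Submodule.Quotient.mk_eq_zero W).mp hz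
        · intro hx
          have : W.mkQ x = 0 := (Submodule.Quotient.mk_eq_zero W).mpr hx
          rw [this]
          simp
      have hφ : φ ≠ 0 := by
        intro h0
        have : LinearMap.ker φ = ⊤ := by rw [h0]; exact LinearMap.ker_zero
        rw [hker] at this
        rw [this, finrank_top, hX] at hW
        omega
      exact ⟨⟨φ, hφ⟩, Subtype.ext hker⟩
  rw [← Nat.card_congr eqv, card_ne_zero_sub, hdual]

end Counting

section Main

variable (n : ℕ)

abbrev Vn (n : ℕ) := Fin n → Ff

instance : Finite (Submodule Kk (Vn n)) :=
  Finite.of_injective (fun C => (C : Set (Vn n))) SetLike.coe_injective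

/-- isotropic of dimension `t` -/
def IsoP (t : ℕ) (C : Submodule Kk (Vn n)) : Prop :=
  (∀ v ∈ C, ∀ w ∈ C, Bf n v w = 0) ∧ finrank Kk C = t

/-- number of isotropic subspaces of dimension `t` -/
def Nn (t : ℕ) : ℕ := Nat.card {C : Submodule Kk (Vn n) // IsoP n t C}

lemma finrank_Ff : finrank Kk Ff = 2 := by
  have h := card_module Ff
  rw [Ff_card] at h
  have h2 : 2 ^ finrank Kk Ff = 2 ^ 2 := by rw [← h]; norm_num
  exact Nat.pow_right_injective (le_refl 2) h2

lemma finrank_Vn : finrank Kk (Vn n) = 2 * n := by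
  rw [Module.finrank_pi_fintype]
  simp [finrank_Ff, Finset.sum_const, mul_comm]

lemma iso_le_orth {t : ℕ} {C : Submodule Kk (Vn n)} (h : IsoP n t C) :
    C ≤ (Bf n).orthogonal C := fun w hw =>
  (LinearMap.BilinForm.mem_orthogonal_iff (B := Bf n)).mpr (fun v hv => h.1 v hv w hw)

lemma finrank_orth {t : ℕ} {C : Submodule Kk (Vn n)} (h : IsoP n t C) :
    finrank Kk ((Bf n).orthogonal C) = 2 * n - t := by
  rw [LinearMap.BilinForm.finrank_orthogonal (Bf_nondeg n) C, finrank_Vn, h.2]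

lemma sup_iso {t : ℕ} {W : Submodule Kk (Vn n)} (hW : IsoP n t W) {w : Vn n}
    (hw : w ∈ (Bf n).orthogonal W) (hw' : w ∉ W) :
    IsoP n (t+1) (W ⊔ Submodule.span Kk {w}) := by
  have horth : ∀ u ∈ W, Bf n u w = 0 := fun u hu =>
    (LinearMap.BilinForm.mem_orthogonal_iff (B := Bf n)).mp hw u hu
  constructor
  · intro x hx y hy
    rw [Submodule.mem_sup] at hx hy
    obtain ⟨u, hu, s, hs, rfl⟩ := hx
    obtain ⟨u', hu', s', hs', rfl⟩ := hy
    obtain ⟨a, rfl⟩ := Submodule.mem_span_singleton.mp hs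
    obtain ⟨b, rfl⟩ := Submodule.mem_span_singleton.mp hs'
    simp only [map_add, map_smul, LinearMap.add_apply, LinearMap.smul_apply]
    rw [hW.1 u hu u' hu', horth u hu, Bf_isRefl n u' w (horth u' hu'), Bf_isAlt n w]
    simp
  · have hint : W ⊓ Submodule.span Kk {w} = ⊥ := by
      rw [eq_bot_iff]
      rintro x ⟨hxW, hxs⟩
      obtain ⟨a, rfl⟩ := Submodule.mem_span_singleton.mp hxs
      rcases Kk_cases a with h | h
      · rw [h, zero_smul]; exact Submodule.zero_mem ⊥
      · rw [h, one_smul] at hxW ⊢; exact absurd hxW hw'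
    have h0 : w ≠ 0 := fun h => hw' (h ▸ W.zero_mem)
    have hsum := Submodule.finrank_sup_add_finrank_inf_eq W (Submodule.span Kk {w})
    rw [hint, finrank_bot, finrank_span_singleton h0, hW.2] at hsum
    omega

/-- the type of flags -/
def FlagT (t : ℕ) := {p : Submodule Kk (Vn n) × Submodule Kk (Vn n) //
  IsoP n t p.1 ∧ IsoP n (t+1) p.2 ∧ p.1 ≤ p.2}

instance (t : ℕ) : Finite (FlagT n t) := by unfold FlagT; infer_instance

/-- total space of the incidence correspondence -/
def AT (t : ℕ) := Σ (W : {C : Submodule Kk (Vn n) // IsoP n t C}),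
  {w : Vn n // w ∈ (Bf n).orthogonal W.1 ∧ w ∉ W.1}

instance (t : ℕ) : Finite (AT n t) := by unfold AT; infer_instance

lemma card_sigma_const {I : Type*} [Finite I] {β : I → Type*} [∀ i, Finite (β i)] (c : ℕ)
    (h : ∀ i, Nat.card (β i) = c) : Nat.card (Σ i, β i) = Nat.card I * c := by
  classical
  cases nonempty_fintype I
  haveI := fun i => Fintype.ofFinite (β i)
  rw [Nat.card_eq_fintype_card, Nat.card_eq_fintype_card, Fintype.card_sigma]
  have hc : ∀ i, Fintype.card (β i) = c := fun i => by
    rw [← Nat.card_eq_fintype_card]; exact h i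
  simp only [hc, Finset.sum_const, Finset.card_univ, smul_eq_mul]

lemma stepA (t : ℕ) : Nat.card (AT n t) = Nn n t * (2^(2*n - t) - 2^t) := by
  refine card_sigma_const _ (fun W => ?_)
  rw [card_diff _ _ (iso_le_orth n W.2)]
  rw [card_module, card_module, finrank_orth n W.2, W.2.2]

/-- the map from the incidence correspondence to flags -/
def gmap (t : ℕ) : AT n t → FlagT n t := fun a =>
  ⟨(a.1.1, a.1.1 ⊔ Submodule.span Kk {a.2.1}),
    a.1.2, sup_iso n a.1.2 a.2.2.1 a.2.2.2, le_sup_left⟩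

lemma stepB (t : ℕ) : Nat.card (AT n t) = Nat.card (FlagT n t) * (2^(t+1) - 2^t) := by
  refine card_of_fibers (gmap n t) _ (fun b => ?_)
  have hb := b.2
  have key : ∀ w : Vn n, w ∈ b.1.2 → w ∉ b.1.1 →
      (w ∈ (Bf n).orthogonal b.1.1 ∧ w ∉ b.1.1) := by
    intro w hw hw'
    refine ⟨?_, hw'⟩
    have h1 : b.1.2 ≤ (Bf n).orthogonal b.1.2 := iso_le_orth n hb.2.1
    have h2 : (Bf n).orthogonal b.1.2 ≤ (Bf n).orthogonal b.1.1 :=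
      LinearMap.BilinForm.orthogonal_le hb.2.2
    exact h2 (h1 hw)
  have e : {a : AT n t // gmap n t a = b} ≃ {w : Vn n // w ∈ b.1.2 ∧ w ∉ b.1.1} := by
    refine Equiv.ofBijective (fun a => ⟨a.1.2.1, ?_, ?_⟩) ⟨?_, ?_⟩
    · have hpair := congrArg Subtype.val a.2
      have hsnd : a.1.1.1 ⊔ Submodule.span Kk {a.1.2.1} = b.1.2 := congrArg Prod.snd hpair
      rw [← hsnd]
      exact Submodule.mem_sup_right (Submodule.mem_span_singleton_self a.1.2.1)
    · have hpair := congrArg Subtype.val a.2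
      have hfst : a.1.1.1 = b.1.1 := congrArg Prod.fst hpair
      rw [← hfst]
      exact a.1.2.2.2
    · rintro ⟨⟨⟨W, hWiso⟩, ⟨w, hw⟩⟩, ha⟩ ⟨⟨⟨W', hWiso'⟩, ⟨w', hw'⟩⟩, ha'⟩ hval
      have hww : w = w' := congrArg Subtype.val hval
      have hW1 : W = b.1.1 := congrArg Prod.fst (congrArg Subtype.val ha)
      have hW2 : W' = b.1.1 := congrArg Prod.fst (congrArg Subtype.val ha')
      have hWW : W = W' := hW1.trans hW2.symm
      subst hWW
      subst hww
      rfl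
    · rintro ⟨w, hw1, hw2⟩
      obtain ⟨horth, -⟩ := key w hw1 hw2
      refine ⟨⟨⟨⟨b.1.1, hb.1⟩, ⟨w, horth, hw2⟩⟩, ?_⟩, rfl⟩
      refine Subtype.ext (Prod.ext rfl ?_)
      show b.1.1 ⊔ Submodule.span Kk {w} = b.1.2
      have hle : b.1.1 ⊔ Submodule.span Kk {w} ≤ b.1.2 :=
        sup_le hb.2.2 ((Submodule.span_le).mpr (by simpa using hw1))
      refine Submodule.eq_of_le_of_finrank_le hle ?_
      rw [hb.2.1.2, (sup_iso n hb.1 horth hw2).2]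
  rw [Nat.card_congr e, card_diff _ _ hb.2.2, card_module, card_module, hb.2.1.2, hb.1.2]

/-- the projection from flags to the bigger space -/
def hmap (t : ℕ) : FlagT n t → {C : Submodule Kk (Vn n) // IsoP n (t+1) C} := fun p =>
  ⟨p.1.2, p.2.2.1⟩

lemma stepC (t : ℕ) :
    Nat.card (FlagT n t) = Nn n (t+1) * (2^(t+1) - 1) := by
  refine card_of_fibers (hmap n t) _ (fun b => ?_)
  have hb := b.2
  have hcard : Nat.card b.1 = 2^(t+1) := by rw [card_module, hb.2]
  have e : {p : FlagT n t // hmap n t p = b} ≃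
      {W'' : Submodule Kk b.1 // finrank Kk W'' = t} := by
    have hle : ∀ p : {p : FlagT n t // hmap n t p = b}, p.1.1.1 ≤ b.1 := by
      intro p
      have hsnd : p.1.1.2 = b.1 := congrArg Subtype.val p.2
      exact hsnd ▸ p.1.2.2.2
    have hmapeq : ∀ p : {p : FlagT n t // hmap n t p = b},
        Submodule.map b.1.subtype (Submodule.comap b.1.subtype p.1.1.1) = p.1.1.1 := by
      intro p
      rw [Submodule.map_comap_subtype, inf_eq_right.mpr (hle p)]
    refine Equiv.ofBijective (fun p => ⟨Submodule.comap b.1.subtype p.1.1.1, ?_⟩) ⟨?_, ?_⟩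
    · have h1 : finrank Kk (Submodule.map b.1.subtype (Submodule.comap b.1.subtype p.1.1.1))
          = finrank Kk (Submodule.comap b.1.subtype p.1.1.1) :=
        Submodule.finrank_map_subtype_eq b.1 _
      rw [hmapeq p] at h1
      rw [← h1, p.1.2.1.2]
    · intro p q hpq
      have hc : Submodule.comap b.1.subtype p.1.1.1 = Submodule.comap b.1.subtype q.1.1.1 :=
        congrArg Subtype.val hpq
      have hfst : p.1.1.1 = q.1.1.1 := by
        rw [← hmapeq p, ← hmapeq q, hc]
      have hsnd : p.1.1.2 = q.1.1.2 := by
        have h1 : p.1.1.2 = b.1 := congrArg Subtype.val p.2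
        have h2 : q.1.1.2 = b.1 := congrArg Subtype.val q.2
        rw [h1, h2]
      exact Subtype.ext (Subtype.ext (Prod.ext hfst hsnd))
    · rintro ⟨W'', hW''⟩
      have hmle : Submodule.map b.1.subtype W'' ≤ b.1 := Submodule.map_subtype_le _ _
      have hiso1 : IsoP n t (Submodule.map b.1.subtype W'') := by
        constructor
        · intro x hx y hy
          exact hb.1 x (hmle hx) y (hmle hy)
        · rw [Submodule.finrank_map_subtype_eq b.1 W'', hW'']
      refine ⟨⟨⟨(Submodule.map b.1.subtype W'', b.1), hiso1, hb, hmle⟩, rfl⟩, ?_⟩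
      refine Subtype.ext ?_
      show Submodule.comap b.1.subtype (Submodule.map b.1.subtype W'') = W''
      exact Submodule.comap_map_eq_of_injective (Submodule.injective_subtype b.1) W''
  rw [Nat.card_congr e, card_hyperplanes (b.1) t hb.2, hcard]

lemma recurrence (t : ℕ) :
    Nn n t * (2^(2*n - t) - 2^t) = Nn n (t+1) * (2^(t+1) - 1) * (2^(t+1) - 2^t) := by
  have h1 := stepA n t
  have h2 := stepB n t
  have h3 := stepC n t
  rw [h3] at h2
  rw [← h1, h2]

lemma Nn_zero : Nn n 0 = 1 := by
  have hiff : ∀ C : Submodule Kk (Vn n), IsoP n 0 C ↔ C = ⊥ := by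
    intro C
    constructor
    · intro h
      exact Submodule.finrank_eq_zero.mp h.2
    · rintro rfl
      refine ⟨?_, finrank_bot Kk (Vn n)⟩
      intro v hv w hw
      have hv0 : v = 0 := (Submodule.mem_bot Kk).mp hv
      simp [hv0]
  unfold Nn
  rw [Nat.card_congr (Equiv.subtypeEquivRight hiff)]
  haveI : Unique {C : Submodule Kk (Vn n) // C = ⊥} :=
    ⟨⟨⟨⊥, rfl⟩⟩, fun a => Subtype.ext a.2⟩
  exact Nat.card_unique

lemma Nn_cast (t : ℕ) (h : t + 1 ≤ n) :
    (Nn n (t+1) : ℚ) = Nn n t * ((2:ℚ)^(2*(n-t)) - 1) / ((2:ℚ)^(t+1) - 1) := by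
  have hrec := recurrence n t
  have h1 : (2:ℕ)^t ≤ 2^(2*n - t) := Nat.pow_le_pow_right (by norm_num) (by omega)
  have h2 : (1:ℕ) ≤ 2^(t+1) := Nat.one_le_two_pow
  have h3 : (2:ℕ)^t ≤ 2^(t+1) := Nat.pow_le_pow_right (by norm_num) (by omega)
  have hq : ((Nn n t * (2^(2*n - t) - 2^t) : ℕ) : ℚ)
      = ((Nn n (t+1) * (2^(t+1) - 1) * (2^(t+1) - 2^t) : ℕ) : ℚ) := by
    exact_mod_cast congrArg (fun k : ℕ => (k : ℚ)) hrec
  rw [Nat.cast_mul, Nat.cast_mul, Nat.cast_mul, Nat.cast_sub h1, Nat.cast_sub h2,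
    Nat.cast_sub h3] at hq
  push_cast at hq
  have he : (2:ℚ)^(2*n - t) = 2^(2*(n-t)) * 2^t := by
    rw [← pow_add]; congr 1; omega
  rw [he] at hq
  have hne : (2:ℚ)^t ≠ 0 := pow_ne_zero _ (by norm_num)
  have hlt : (1:ℚ) < 2^(t+1) := by
    have : (1:ℚ) < 2 := by norm_num
    calc (1:ℚ) = 1^(t+1) := (one_pow _).symm
    _ < 2^(t+1) := by
        apply pow_lt_pow_left₀ this (by norm_num)
        omega
  have hne2 : (2:ℚ)^(t+1) - 1 ≠ 0 := sub_ne_zero.mpr (ne_of_gt hlt)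
  rw [eq_div_iff hne2]
  refine mul_right_cancel₀ hne ?_
  linear_combination -hq
  
lemma Nn_formula (t : ℕ) (ht : t ≤ n) :
    (Nn n t : ℚ) = ∏ r ∈ Finset.range t, ((2:ℚ)^(2*(n-r)) - 1) / ((2:ℚ)^(r+1) - 1) := by
  induction t with
  | zero => simp [Nn_zero]
  | succ t ih =>
    have ht' : t ≤ n := Nat.le_of_succ_le ht
    rw [Finset.prod_range_succ, ← ih ht', Nn_cast n t ht, mul_div_assoc]

end Main

end SOCount



/-- The number of additive self-orthogonal codes `C ⊆ F₄ⁿ` of size `2^t` equals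
`S(n,t) = ∏_{r=0}^{t-1} (2^{2(n-r)} - 1)/(2^{r+1} - 1)`. -/
theorem count_self_orthogonal_codes (n t : ℕ) (ht : t ≤ n) :
    (Nat.card {C : Submodule (ZMod 2) (Fin n → GaloisField 2 2) //
        IsSelfOrthogonal C ∧ Nat.card C = 2^t} : ℚ)
      = ∏ r ∈ Finset.range t, ((2:ℚ)^(2*(n-r)) - 1) / ((2:ℚ)^(r+1) - 1) := by
  have hconv : Nat.card {C : Submodule (ZMod 2) (Fin n → GaloisField 2 2) //
      IsSelfOrthogonal C ∧ Nat.card C = 2^t} = Nn n t := by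
    apply Nat.card_congr
    apply Equiv.subtypeEquivRight
    intro C
    constructor
    · rintro ⟨hso, hcard⟩
      refine ⟨fun v hv w hw => (traceIP_zero_iff v w).mp (hso v hv w hw), ?_⟩
      have hc := card_module (↥C)
      rw [hcard] at hc
      exact (Nat.pow_right_injective (le_refl 2) hc).symm
    · rintro ⟨hiso, hfr⟩
      refine ⟨fun v hv w hw => (traceIP_zero_iff v w).mpr (hiso v hv w hw), ?_⟩
      rw [card_module (↥C), hfr]
  rw [hconv]
  exact Nn_formula n t ht
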